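/- arXiv:2107.06123 — 2 statements merged into one kernel-verified Lean document; each statement's English description precedes it below -/
import Mathlib

section
/- For every d > 0 with d ≠ e, a point α ∈ [0,1] is a local maximiser of Φ_d on [0,1] if and only if α is a stable fixed point of φ_d (i.e. φ_d(α) = α and φ_d'(α) < 1). For d = e, the function φ_e has a unique fixed point ᾱ = 1 − 1/e, which is the unique local maximiser of Φ_e on [0,1] and is an inflection point of φ_e (φ_e'(ᾱ) = 1 and φ_e''(ᾱ) = 0). -/
/-!
Since `Φ_d'(α) = d² e^{-d(1-α)} (φ_d(α) - α)`, the function `Φ_d` increases exactly where `φ_d`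
lies above the diagonal. As `φ_d` maps into `(0,1)`, a local maximiser of `Φ_d` on `[0,1]` is a
fixed point, and a fixed point is one exactly when `φ_d - id` changes sign from `+` to `-` there:
this happens when `φ_d' < 1` and fails when `φ_d' > 1`.

The tangential case `φ_d'(α) = 1` forces `d = e`: for `a = d(1-α)` and `b = d e^{-d(1-α)}` the
fixed point equation gives `d = a e^b = b e^a` and tangency gives `ab = 1`, so `s = log a`
satisfies `sinh s = s`; hence `a = b = 1` and `d = e`.

For `d = e`, taking logarithms shows that `φ_e(x) - x` has the sign of `F(1-x)`, where
`F(u) = e e^{-eu} + log u` vanishes at `1/e` and is strictly increasing because `e t ≤ e^t`.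
-/

open Filter Topology MeasureTheory ProbabilityTheory

noncomputable section

/-- `φ_d(α) = 1 − exp(−d·exp(−d(1−α)))`. -/
def phiFn (d α : ℝ) : ℝ := 1 - Real.exp (-d * Real.exp (-d * (1 - α)))

/-- `Φ_d(α) = exp(−d·exp(−d(1−α))) + (1 + d(1−α))·exp(−d(1−α)) − 1`. -/
def PhiFn (d α : ℝ) : ℝ :=
  Real.exp (-d * Real.exp (-d * (1 - α))) + (1 + d * (1 - α)) * Real.exp (-d * (1 - α)) - 1

/-- `α_*(d)`: the smallest fixed point of `φ_d` in `[0,1]`. -/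
def alphaMin (d : ℝ) : ℝ := sInf {α : ℝ | α ∈ Set.Icc (0:ℝ) 1 ∧ phiFn d α = α}

/-- `α^*(d)`: the largest fixed point of `φ_d` in `[0,1]`. -/
def alphaMax (d : ℝ) : ℝ := sSup {α : ℝ | α ∈ Set.Icc (0:ℝ) 1 ∧ phiFn d α = α}

/-- `α_0(d)`: for `d ≤ e` equal to `α_*(d)`; for `d > e` the unique fixed point of `φ_d`
in the open interval `(α_*(d), α^*(d))`. -/
def alphaMid (d : ℝ) : ℝ :=
  if d ≤ Real.exp 1 then alphaMin d
  else sInf {α : ℝ | α ∈ Set.Ioo (alphaMin d) (alphaMax d) ∧ phiFn d α = α}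

open Set SignType

theorem StrictMonoOn.sign_sub {α β : Type*} [AddCommGroup α] [LinearOrder α]
    [IsOrderedAddMonoid α] [AddCommGroup β] [LinearOrder β] [IsOrderedAddMonoid β]
    {f : α → β} {s : Set α} {a b : α} (hf : StrictMonoOn f s) (ha : a ∈ s) (hb : b ∈ s) :
    sign (f a - f b) = sign (a - b) := by
  rcases lt_trichotomy a b with h | rfl | h
  · rw [sign_neg (sub_neg.2 (hf ha hb h)), sign_neg (sub_neg.2 h)]
  · simp
  · rw [sign_pos (sub_pos.2 (hf hb ha h)), sign_pos (sub_pos.2 h)]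

theorem Real.sinh_eq_self_iff {x : ℝ} : Real.sinh x = x ↔ x = 0 := by
  refine ⟨fun h => ?_, fun h => by simp [h]⟩
  rcases lt_trichotomy x 0 with hx | hx | hx
  · exact absurd h (Real.sinh_lt_self_iff.2 hx).ne
  · exact hx
  · exact absurd h (Real.self_lt_sinh_iff.2 hx).ne'

theorem Real.exp_one_mul_lt_exp {t : ℝ} (ht : t ≠ 1) : Real.exp 1 * t < Real.exp t := by
  have h := Real.add_one_lt_exp (sub_ne_zero.2 ht)
  rw [sub_add_cancel, Real.exp_sub, lt_div_iff₀ (Real.exp_pos 1)] at h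
  linarith

theorem not_isLocalMaxOn_of_deriv_pos_right {f : ℝ → ℝ} {s : Set ℝ} {a : ℝ}
    (hf : ContinuousWithinAt f (Ici a) a) (hs : s ∈ 𝓝[≥] a)
    (hderiv : ∀ᶠ x in 𝓝[>] a, 0 < deriv f x) : ¬ IsLocalMaxOn f s a := by
  intro hmax
  obtain ⟨b, hab, hb⟩ := (nhdsGT_basis a).eventually_iff.mp hderiv
  have hmono : StrictMonoOn f (Ico a b) := by
    refine strictMonoOn_of_deriv_pos (convex_Ico a b) (fun x hx => ?_) (by simpa using hb)
    rcases hx.1.eq_or_lt with rfl | hax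
    · exact hf.mono Ico_subset_Ici_self
    · exact (differentiableAt_of_deriv_ne_zero (hb ⟨hax, hx.2⟩).ne').continuousAt
        |>.continuousWithinAt
  have hgt : ∀ᶠ x in 𝓝[>] a, f a < f x :=
    mem_of_superset (Ioo_mem_nhdsGT hab) fun x hx =>
      hmono (left_mem_Ico.2 hab) (Ioo_subset_Ico_self hx) hx.1
  have hle : ∀ᶠ x in 𝓝[>] a, f x ≤ f a :=
    (nhdsWithin_mono a Ioi_subset_Ici_self).trans (nhdsWithin_le_of_mem hs) hmax
  obtain ⟨x, hlt, hle⟩ := (hgt.and hle).exists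
  exact hlt.not_ge hle

theorem not_isLocalMaxOn_of_deriv_neg_left {f : ℝ → ℝ} {s : Set ℝ} {a : ℝ}
    (hf : ContinuousWithinAt f (Iic a) a) (hs : s ∈ 𝓝[≤] a)
    (hderiv : ∀ᶠ x in 𝓝[<] a, deriv f x < 0) : ¬ IsLocalMaxOn f s a := by
  intro hmax
  obtain ⟨b, hba, hb⟩ := (nhdsLT_basis a).eventually_iff.mp hderiv
  have hanti : StrictAntiOn f (Ioc b a) := by
    refine strictAntiOn_of_deriv_neg (convex_Ioc b a) (fun x hx => ?_) (by simpa using hb)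
    rcases hx.2.eq_or_lt with rfl | hxa
    · exact hf.mono Ioc_subset_Iic_self
    · exact (differentiableAt_of_deriv_ne_zero (hb ⟨hx.1, hxa⟩).ne).continuousAt
        |>.continuousWithinAt
  have hgt : ∀ᶠ x in 𝓝[<] a, f a < f x :=
    mem_of_superset (Ioo_mem_nhdsLT hba) fun x hx =>
      hanti (Ioo_subset_Ioc_self hx) (right_mem_Ioc.2 hba) hx.2
  have hle : ∀ᶠ x in 𝓝[<] a, f x ≤ f a :=
    (nhdsWithin_mono a Iio_subset_Iic_self).trans (nhdsWithin_le_of_mem hs) hmax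
  obtain ⟨x, hlt, hle⟩ := (hgt.and hle).exists
  exact hlt.not_ge hle

theorem hasDerivAt_exp_neg_mul_one_sub (d x : ℝ) :
    HasDerivAt (fun y => Real.exp (-d * (1 - y))) (d * Real.exp (-d * (1 - x))) x := by
  have h : HasDerivAt (fun y : ℝ => -d * (1 - y)) d x := by
    simpa using ((hasDerivAt_const x (1 : ℝ)).sub (hasDerivAt_id x)).const_mul (-d)
  simpa [mul_comm] using h.exp

theorem hasDerivAt_phiFn (d x : ℝ) :
    HasDerivAt (phiFn d)
      (d ^ 2 * Real.exp (-d * (1 - x)) * Real.exp (-d * Real.exp (-d * (1 - x)))) x := by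
  have h := (((hasDerivAt_exp_neg_mul_one_sub d x).const_mul (-d)).exp).const_sub 1
  exact h.congr_deriv (by ring)

theorem hasDerivAt_PhiFn (d x : ℝ) :
    HasDerivAt (PhiFn d) (d ^ 2 * Real.exp (-d * (1 - x)) * (phiFn d x - x)) x := by
  have hE := hasDerivAt_exp_neg_mul_one_sub d x
  have hlin : HasDerivAt (fun y : ℝ => 1 + d * (1 - y)) (-d) x := by
    simpa using (((hasDerivAt_const x (1 : ℝ)).sub (hasDerivAt_id x)).const_mul d).const_add 1
  refine (((hE.const_mul (-d)).exp.add (hlin.mul hE)).sub_const 1).congr_deriv ?_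
  unfold phiFn
  ring

theorem deriv_phiFn (d : ℝ) :
    deriv (phiFn d) =
      fun x => d ^ 2 * Real.exp (-d * (1 - x)) * Real.exp (-d * Real.exp (-d * (1 - x))) :=
  funext fun x => (hasDerivAt_phiFn d x).deriv

theorem sign_deriv_PhiFn {d : ℝ} (hd : d ≠ 0) (x : ℝ) :
    sign (deriv (PhiFn d) x) = sign (phiFn d x - x) := by
  rw [(hasDerivAt_PhiFn d x).deriv, sign_mul, sign_pos (by positivity), one_mul]

theorem deriv_PhiFn_pos_iff {d : ℝ} (hd : d ≠ 0) {x : ℝ} :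
    0 < deriv (PhiFn d) x ↔ x < phiFn d x := by
  rw [← sign_eq_one_iff, sign_deriv_PhiFn hd, sign_eq_one_iff, sub_pos]

theorem deriv_PhiFn_neg_iff {d : ℝ} (hd : d ≠ 0) {x : ℝ} :
    deriv (PhiFn d) x < 0 ↔ phiFn d x < x := by
  rw [← sign_eq_neg_one_iff, sign_deriv_PhiFn hd, sign_eq_neg_one_iff, sub_neg]

theorem phiFn_mem_Ioo {d : ℝ} (hd : 0 < d) (x : ℝ) : phiFn d x ∈ Ioo (0 : ℝ) 1 := by
  have hneg : -d * Real.exp (-d * (1 - x)) < 0 := by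
    nlinarith [Real.exp_pos (-d * (1 - x))]
  exact ⟨sub_pos.2 (Real.exp_lt_one_iff.2 hneg), sub_lt_self _ (Real.exp_pos _)⟩

theorem phiFn_eq_self_of_isLocalMaxOn {d α : ℝ} (hd : 0 < d) (hα : α ∈ Icc (0 : ℝ) 1)
    (hmax : IsLocalMaxOn (PhiFn d) (Icc 0 1) α) : phiFn d α = α := by
  have hφ : ContinuousAt (phiFn d) α := (hasDerivAt_phiFn d α).continuousAt
  have hΦ : ContinuousAt (PhiFn d) α := (hasDerivAt_PhiFn d α).continuousAt
  rcases lt_trichotomy (phiFn d α) α with hlt | heq | hgt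
  · have hα0 : 0 < α := (phiFn_mem_Ioo hd α).1.trans hlt
    refine absurd hmax (not_isLocalMaxOn_of_deriv_neg_left hΦ.continuousWithinAt
      (Icc_mem_nhdsLE_of_mem ⟨hα0, hα.2⟩) ?_)
    filter_upwards [nhdsWithin_le_nhds (hφ.eventually_lt continuousAt_id hlt)] with x hx
    exact (deriv_PhiFn_neg_iff hd.ne').2 hx
  · exact heq
  · have hα1 : α < 1 := hgt.trans (phiFn_mem_Ioo hd α).2
    refine absurd hmax (not_isLocalMaxOn_of_deriv_pos_right hΦ.continuousWithinAt
      (Icc_mem_nhdsGE_of_mem ⟨hα.1, hα1⟩) ?_)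
    filter_upwards [nhdsWithin_le_nhds (continuousAt_id.eventually_lt hφ hgt)] with x hx
    exact (deriv_PhiFn_pos_iff hd.ne').2 hx

theorem deriv_phiFn_sub_id (d α : ℝ) :
    deriv (fun x => phiFn d x - x) α = deriv (phiFn d) α - 1 :=
  ((hasDerivAt_phiFn d α).differentiableAt.hasDerivAt.sub (hasDerivAt_id' α)).deriv

theorem isLocalMax_PhiFn_of_sign {d α : ℝ} (hd : d ≠ 0)
    (hsign : ∀ᶠ x in 𝓝 α, sign (phiFn d x - x) = sign (α - x)) : IsLocalMax (PhiFn d) α :=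
  isLocalMax_of_sign_deriv (hasDerivAt_PhiFn d α).continuousAt <| by
    filter_upwards [nhdsWithin_le_nhds hsign] with x hx
    rw [sign_deriv_PhiFn hd, hx]

theorem isLocalMax_PhiFn_of_deriv_phiFn_lt_one {d α : ℝ} (hd : d ≠ 0) (hfix : phiFn d α = α)
    (hstable : deriv (phiFn d) α < 1) : IsLocalMax (PhiFn d) α :=
  isLocalMax_PhiFn_of_sign hd <| eventually_nhdsWithin_sign_eq_of_deriv_neg
    (f := fun x => phiFn d x - x) (by rw [deriv_phiFn_sub_id]; linarith) (sub_eq_zero.2 hfix)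

theorem not_isLocalMaxOn_PhiFn_of_one_lt_deriv_phiFn {d α : ℝ} (hd : 0 < d)
    (hfix : phiFn d α = α) (hunstable : 1 < deriv (phiFn d) α) :
    ¬ IsLocalMaxOn (PhiFn d) (Icc 0 1) α := by
  have hα := hfix ▸ phiFn_mem_Ioo hd α
  have hsign := eventually_nhdsWithin_sign_eq_of_deriv_pos (f := fun x => phiFn d x - x)
    (by rw [deriv_phiFn_sub_id]; linarith) (sub_eq_zero.2 hfix)
  refine not_isLocalMaxOn_of_deriv_pos_right
    (hasDerivAt_PhiFn d α).continuousAt.continuousWithinAt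
    (Icc_mem_nhdsGE_of_mem ⟨hα.1.le, hα.2⟩) ?_
  filter_upwards [nhdsWithin_le_nhds hsign, self_mem_nhdsWithin] with x hx (hαx : α < x)
  rw [← sign_eq_one_iff, sign_deriv_PhiFn hd.ne', hx, sign_eq_one_iff, sub_pos]
  exact hαx

theorem eq_exp_one_of_mul_eq_one_of_mul_exp_eq {d a b : ℝ} (ha : 0 < a) (hab : a * b = 1)
    (hda : d = a * Real.exp b) (hdb : d = b * Real.exp a) : d = Real.exp 1 := by
  obtain ⟨s, rfl⟩ : ∃ s, a = Real.exp s := ⟨Real.log a, (Real.exp_log ha).symm⟩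
  have hb : b = Real.exp (-s) := by
    rw [Real.exp_neg, eq_inv_of_mul_eq_one_right hab]
  rw [hb] at hda hdb
  have hsinh : Real.sinh s = s := by
    have h := hda.symm.trans hdb
    rw [← Real.exp_add, ← Real.exp_add] at h
    rw [Real.sinh_eq]
    linarith [Real.exp_injective h]
  rw [hda, Real.sinh_eq_self_iff.1 hsinh]
  simp

theorem eq_exp_one_of_deriv_phiFn_eq_one {d α : ℝ} (hd : 0 < d) (hfix : phiFn d α = α)
    (htangent : deriv (phiFn d) α = 1) : d = Real.exp 1 := by
  have hα := hfix ▸ phiFn_mem_Ioo hd α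
  rw [(hasDerivAt_phiFn d α).deriv] at htangent
  set E := Real.exp (-d * (1 - α)) with hE
  have hu : Real.exp (-d * E) = 1 - α := by
    unfold phiFn at hfix
    linarith
  refine eq_exp_one_of_mul_eq_one_of_mul_exp_eq (a := d * (1 - α)) (b := d * E)
    (mul_pos hd (sub_pos.2 hα.2)) ?_ ?_ ?_
  · rw [← hu]
    linear_combination htangent
  · rw [← hu, mul_assoc, ← Real.exp_add, neg_mul, neg_add_cancel, Real.exp_zero, mul_one]
  · rw [hE, mul_assoc, ← Real.exp_add, neg_mul, neg_add_cancel, Real.exp_zero, mul_one]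

theorem isLocalMaxOn_PhiFn_iff {d α : ℝ} (hd : 0 < d) (hde : d ≠ Real.exp 1)
    (hα : α ∈ Icc (0 : ℝ) 1) :
    IsLocalMaxOn (PhiFn d) (Icc 0 1) α ↔ phiFn d α = α ∧ deriv (phiFn d) α < 1 := by
  refine ⟨fun hmax => ?_, fun ⟨hfix, hstable⟩ =>
    (isLocalMax_PhiFn_of_deriv_phiFn_lt_one hd.ne' hfix hstable).on _⟩
  have hfix := phiFn_eq_self_of_isLocalMaxOn hd hα hmax
  refine ⟨hfix, lt_of_not_ge fun hge => ?_⟩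
  rcases hge.eq_or_lt with htangent | hunstable
  · exact hde (eq_exp_one_of_deriv_phiFn_eq_one hd hfix htangent.symm)
  · exact not_isLocalMaxOn_PhiFn_of_one_lt_deriv_phiFn hd hfix hunstable hmax

theorem exp_neg_exp_one_mul_one_div :
    Real.exp (-Real.exp 1 * (1 / Real.exp 1)) = 1 / Real.exp 1 := by
  rw [neg_mul, mul_one_div_cancel (Real.exp_ne_zero 1), Real.exp_neg, one_div]

theorem strictMonoOn_exp_one_mul_exp_add_log :
    StrictMonoOn (fun u => Real.exp 1 * Real.exp (-Real.exp 1 * u) + Real.log u) (Ioi 0) := by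
  have hderiv : ∀ u : ℝ, 0 < u → HasDerivAt
      (fun u => Real.exp 1 * Real.exp (-Real.exp 1 * u) + Real.log u)
      (u⁻¹ - Real.exp 1 ^ 2 * Real.exp (-Real.exp 1 * u)) u := fun u hu =>
    ((((hasDerivAt_id' u).const_mul _).exp.const_mul _).add
      (Real.hasDerivAt_log hu.ne')).congr_deriv (by ring)
  have hpos : ∀ u : ℝ, 0 < u → u ≠ (Real.exp 1)⁻¹ →
      0 < u⁻¹ - Real.exp 1 ^ 2 * Real.exp (-Real.exp 1 * u) := by
    intro u hu hne
    have hlt := Real.exp_one_mul_lt_exp (t := Real.exp 1 * u)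
      fun h => hne (eq_inv_of_mul_eq_one_right h)
    rw [neg_mul, Real.exp_neg, sub_pos, ← div_eq_mul_inv, div_lt_iff₀ (Real.exp_pos _),
      inv_mul_eq_div, lt_div_iff₀ hu]
    linarith
  have hcont : ContinuousOn (fun u => Real.exp 1 * Real.exp (-Real.exp 1 * u) + Real.log u)
      (Ioi 0) := fun u hu => (hderiv u hu).continuousAt.continuousWithinAt
  have hc : (0 : ℝ) < (Real.exp 1)⁻¹ := by positivity
  rw [← Ioc_union_Ici_eq_Ioi hc]
  refine StrictMonoOn.union ?_ ?_ (isGreatest_Ioc hc) isLeast_Ici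
  · refine strictMonoOn_of_deriv_pos (convex_Ioc _ _) (hcont.mono Ioc_subset_Ioi_self) ?_
    intro u hu
    rw [interior_Ioc] at hu
    rw [(hderiv u hu.1).deriv]
    exact hpos u hu.1 hu.2.ne
  · refine strictMonoOn_of_deriv_pos (convex_Ici _) (hcont.mono fun u hu => hc.trans_le hu) ?_
    intro u hu
    rw [interior_Ici] at hu
    rw [(hderiv u (hc.trans hu)).deriv]
    exact hpos u (hc.trans hu) hu.ne'

theorem sign_phiFn_exp_one_sub_self (x : ℝ) :
    sign (phiFn (Real.exp 1) x - x) = sign (1 - 1 / Real.exp 1 - x) := by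
  have he : (0 : ℝ) < 1 / Real.exp 1 := by positivity
  rcases lt_or_ge x 1 with hx | hx
  · have hu : 0 < 1 - x := sub_pos.2 hx
    have hlog := (Real.exp_strictMono.strictMonoOn univ).sign_sub (mem_univ (Real.log (1 - x)))
      (mem_univ (-Real.exp 1 * Real.exp (-Real.exp 1 * (1 - x))))
    have hF := strictMonoOn_exp_one_mul_exp_add_log.sign_sub hu he
    rw [exp_neg_exp_one_mul_one_div, one_div, Real.log_inv, Real.log_exp,
      mul_inv_cancel₀ (Real.exp_ne_zero 1), add_neg_cancel, sub_zero] at hF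
    rw [Real.exp_log hu] at hlog
    calc sign (phiFn (Real.exp 1) x - x)
        = sign (1 - x - Real.exp (-Real.exp 1 * Real.exp (-Real.exp 1 * (1 - x)))) := by
          unfold phiFn; congr 1; ring
      _ = sign (Real.exp 1 * Real.exp (-Real.exp 1 * (1 - x)) + Real.log (1 - x)) := by
          rw [hlog]; congr 1; ring
      _ = sign (1 - 1 / Real.exp 1 - x) := by
          rw [hF]; congr 1; ring
  · rw [sign_neg (by linarith [(phiFn_mem_Ioo (Real.exp_pos 1) x).2]), sign_neg (by linarith)]

theorem phiFn_exp_one_eq_self_iff (α : ℝ) :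
    phiFn (Real.exp 1) α = α ↔ α = 1 - 1 / Real.exp 1 := by
  rw [← sub_eq_zero, ← sign_eq_zero_iff, sign_phiFn_exp_one_sub_self, sign_eq_zero_iff,
    sub_eq_zero, eq_comm]

theorem isLocalMaxOn_PhiFn_exp_one_iff {α : ℝ} (hα : α ∈ Icc (0 : ℝ) 1) :
    IsLocalMaxOn (PhiFn (Real.exp 1)) (Icc 0 1) α ↔ α = 1 - 1 / Real.exp 1 := by
  refine ⟨fun hmax => (phiFn_exp_one_eq_self_iff α).1
    (phiFn_eq_self_of_isLocalMaxOn (Real.exp_pos 1) hα hmax), ?_⟩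
  rintro rfl
  exact (isLocalMax_PhiFn_of_sign (Real.exp_ne_zero 1)
    (Eventually.of_forall sign_phiFn_exp_one_sub_self)).on _

theorem hasDerivAt_deriv_phiFn (d x : ℝ) :
    HasDerivAt (deriv (phiFn d))
      (d ^ 3 * Real.exp (-d * (1 - x)) * Real.exp (-d * Real.exp (-d * (1 - x))) *
        (1 - d * Real.exp (-d * (1 - x)))) x := by
  have hE := hasDerivAt_exp_neg_mul_one_sub d x
  rw [deriv_phiFn]
  exact ((hE.const_mul (d ^ 2)).mul (hE.const_mul (-d)).exp).congr_deriv (by ring)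

theorem deriv_phiFn_exp_one_at_fixedPoint :
    deriv (phiFn (Real.exp 1)) (1 - 1 / Real.exp 1) = 1 := by
  rw [deriv_phiFn]
  simp only [sub_sub_cancel, exp_neg_exp_one_mul_one_div]
  field_simp

theorem deriv_deriv_phiFn_exp_one_at_fixedPoint :
    deriv (deriv (phiFn (Real.exp 1))) (1 - 1 / Real.exp 1) = 0 := by
  rw [(hasDerivAt_deriv_phiFn _ _).deriv, sub_sub_cancel, exp_neg_exp_one_mul_one_div,
    mul_one_div_cancel (Real.exp_ne_zero 1), sub_self, mul_zero]

/-- for `d > 0`, `d ≠ e`, the local maximisers of `Φ_d` on `[0,1]` are exactly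
the stable fixed points of `φ_d`; for `d = e` the unique fixed point `ᾱ = 1 − 1/e` is the
unique local maximiser of `Φ_e` and an inflection point of `φ_e`. -/
theorem statement4 :
    (∀ d : ℝ, 0 < d → d ≠ Real.exp 1 →
      ∀ α ∈ Set.Icc (0:ℝ) 1,
        (IsLocalMaxOn (PhiFn d) (Set.Icc (0:ℝ) 1) α ↔
          phiFn d α = α ∧ deriv (phiFn d) α < 1)) ∧
    ((∀ α ∈ Set.Icc (0:ℝ) 1,
        (phiFn (Real.exp 1) α = α ↔ α = 1 - 1 / Real.exp 1)) ∧
     (∀ α ∈ Set.Icc (0:ℝ) 1,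
        (IsLocalMaxOn (PhiFn (Real.exp 1)) (Set.Icc (0:ℝ) 1) α ↔ α = 1 - 1 / Real.exp 1)) ∧
     deriv (phiFn (Real.exp 1)) (1 - 1 / Real.exp 1) = 1 ∧
     deriv (deriv (phiFn (Real.exp 1))) (1 - 1 / Real.exp 1) = 0) :=
  ⟨fun _ hd hde _ hα => isLocalMaxOn_PhiFn_iff hd hde hα,
    fun α _ => phiFn_exp_one_eq_self_iff α, fun _ hα => isLocalMaxOn_PhiFn_exp_one_iff hα,
    deriv_phiFn_exp_one_at_fixedPoint, deriv_deriv_phiFn_exp_one_at_fixedPoint⟩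
end
end

section
/- For any c_0, c_1 > 0 there exists c_2 > 0 such that for all n > 0 the following holds. Suppose w : {1,…,n} → (0,∞) is any function such that (1/n)·Σ_{i=1}^n w_i·1{w_i > t} ≤ c_0·exp(−c_1·t) for every t ≥ 1, and suppose P_1, …, P_ℓ is any partition of {1,…,n} into pairwise disjoint sets such that (1/n)·Σ_{j=1}^ℓ |P_j|·1{|P_j| > t} ≤ c_0·exp(−c_1·t) for every t ≥ 1. Then (1/n)·Σ_{j=1}^ℓ ( Σ_{i ∈ P_j} w_i )^2 ≤ c_2. -/
/-!
Cauchy–Schwarz on each block, followed by `|P| w² ≤ w³ + |P|³`, bounds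
`∑ⱼ (∑_{i ∈ Pⱼ} wᵢ)²` by `∑ᵢ wᵢ³ + ∑ⱼ |Pⱼ|⁴`. Both are moments of a family with exponentially
decaying tails: slicing `a ↦ aᵐ` along the levels `k + 1 < a ≤ k + 2` bounds the `(m+1)`-st
moment by the first moment plus `∑ₖ (k + 2)ᵐ` times the tail mass above `k + 1`, a convergent
series.
-/

open Finset Function Real

lemma mul_sq_le_pow_three_add_pow_three {c x : ℝ} (hc : 0 ≤ c) (hx : 0 ≤ x) :
    c * x ^ 2 ≤ x ^ 3 + c ^ 3 := by
  rcases le_total x c with h | h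
  · nlinarith [mul_le_mul_of_nonneg_left (pow_le_pow_left₀ hx h 2) hc, pow_nonneg hx 3]
  · nlinarith [mul_le_mul_of_nonneg_right h (sq_nonneg x), pow_nonneg hc 3]

lemma sq_sum_le_sum_pow_three_add_card_pow_four {ι : Type*} (s : Finset ι) {w : ι → ℝ}
    (hw : ∀ i ∈ s, 0 ≤ w i) :
    (∑ i ∈ s, w i) ^ 2 ≤ ∑ i ∈ s, w i ^ 3 + (#s : ℝ) ^ 4 := by
  calc (∑ i ∈ s, w i) ^ 2 ≤ #s * ∑ i ∈ s, w i ^ 2 := sq_sum_le_card_mul_sum_sq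
    _ = ∑ i ∈ s, (#s : ℝ) * w i ^ 2 := mul_sum _ _ _
    _ ≤ ∑ i ∈ s, (w i ^ 3 + (#s : ℝ) ^ 3) :=
      sum_le_sum fun i hi => mul_sq_le_pow_three_add_pow_three (Nat.cast_nonneg _) (hw i hi)
    _ = ∑ i ∈ s, w i ^ 3 + (#s : ℝ) ^ 4 := by
      rw [sum_add_distrib, sum_const, nsmul_eq_mul]; ring

lemma sum_sq_sum_le_sum_pow_three_add_sum_card_pow_four {ι κ : Type*} [Fintype ι] [Fintype κ]
    {w : ι → ℝ} (hw : ∀ i, 0 ≤ w i) {P : κ → Finset ι} (hP : Pairwise (Disjoint on P)) :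
    ∑ j, (∑ i ∈ P j, w i) ^ 2 ≤ ∑ i, w i ^ 3 + ∑ j, (#(P j) : ℝ) ^ 4 := by
  classical
  calc ∑ j, (∑ i ∈ P j, w i) ^ 2 ≤ ∑ j, (∑ i ∈ P j, w i ^ 3 + (#(P j) : ℝ) ^ 4) :=
        sum_le_sum fun j _ => sq_sum_le_sum_pow_three_add_card_pow_four _ fun i _ => hw i
    _ = ∑ j, ∑ i ∈ P j, w i ^ 3 + ∑ j, (#(P j) : ℝ) ^ 4 := sum_add_distrib
    _ ≤ ∑ i, w i ^ 3 + ∑ j, (#(P j) : ℝ) ^ 4 := by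
      rw [← sum_biUnion (hP.set_pairwise _)]
      gcongr ?_ + _
      exact sum_le_sum_of_subset_of_nonneg (subset_univ _) fun i _ _ => pow_nonneg (hw i) 3

lemma sum_card_le_card_of_pairwise_disjoint {ι κ : Type*} [Fintype ι] [Fintype κ]
    {P : κ → Finset ι} (hP : Pairwise (Disjoint on P)) :
    ∑ j, #(P j) ≤ Fintype.card ι := by
  classical
  rw [← card_biUnion (hP.set_pairwise _)]
  exact card_le_univ _

lemma pow_le_one_add_sum_ite_lt (m N : ℕ) {x : ℝ} (hx0 : 0 ≤ x) (hxN : x ≤ N + 1) :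
    x ^ m ≤ 1 + ∑ k ∈ range N, if (k : ℝ) + 1 < x then ((k : ℝ) + 2) ^ m else 0 := by
  have hterm : ∀ k ∈ range N, 0 ≤ if (k : ℝ) + 1 < x then ((k : ℝ) + 2) ^ m else 0 :=
    fun k _ => by split_ifs <;> positivity
  rcases le_or_gt x 1 with hx1 | hx1
  · linarith [pow_le_one₀ (n := m) hx0 hx1, sum_nonneg hterm]
  obtain ⟨k, hk⟩ : ∃ k, ⌈x⌉₊ = k + 2 :=
    ⟨⌈x⌉₊ - 2, by have := Nat.lt_ceil.2 (by exact_mod_cast hx1 : ((1 : ℕ) : ℝ) < x); omega⟩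
  have hkN : k ∈ range N := by
    have := Nat.ceil_le.2 (by exact_mod_cast hxN : x ≤ ((N + 1 : ℕ) : ℝ))
    rw [mem_range]; omega
  have hlt : (k : ℝ) + 1 < x := by
    have := Nat.ceil_lt_add_one hx0
    rw [hk] at this; push_cast at this; linarith
  have hle : x ≤ (k : ℝ) + 2 := by
    have := Nat.le_ceil x
    rwa [hk, Nat.cast_add, Nat.cast_two] at this
  calc x ^ m ≤ ((k : ℝ) + 2) ^ m := pow_le_pow_left₀ hx0 hle m
    _ = if (k : ℝ) + 1 < x then ((k : ℝ) + 2) ^ m else 0 := (if_pos hlt).symm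
    _ ≤ ∑ k ∈ range N, if (k : ℝ) + 1 < x then ((k : ℝ) + 2) ^ m else 0 :=
      single_le_sum hterm hkN
    _ ≤ _ := le_add_of_nonneg_left zero_le_one

theorem mul_sum_pow_succ_le_of_tail_le {ι : Type*} [Fintype ι] {a : ι → ℝ} (ha : ∀ i, 0 ≤ a i)
    {c : ℝ} (hc : 0 ≤ c) (m : ℕ) (T : ℝ → ℝ)
    (htail : ∀ t, 1 ≤ t → c * ∑ i, (if t < a i then a i else 0) ≤ T t)
    (hT : Summable fun k : ℕ => ((k : ℝ) + 2) ^ m * T ((k : ℝ) + 1)) :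
    c * ∑ i, a i ^ (m + 1) ≤ c * ∑ i, a i + ∑' k : ℕ, ((k : ℝ) + 2) ^ m * T ((k : ℝ) + 1) := by
  set N := ⌈∑ i, a i⌉₊
  have haN : ∀ i, a i ≤ N + 1 := fun i => by
    linarith [single_le_sum (fun i _ => ha i) (mem_univ i), Nat.le_ceil (∑ i, a i)]
  have htail_nonneg : ∀ t, 0 ≤ c * ∑ i, (if t < a i then a i else 0) := fun t =>
    mul_nonneg hc (sum_nonneg fun i _ => by split_ifs <;> simp [ha i])
  have hpoint : ∀ i, a i ^ (m + 1) ≤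
      a i + ∑ k ∈ range N, ((k : ℝ) + 2) ^ m * (if (k : ℝ) + 1 < a i then a i else 0) := by
    intro i
    calc a i ^ (m + 1) = a i * a i ^ m := pow_succ' _ _
      _ ≤ a i * (1 + ∑ k ∈ range N, if (k : ℝ) + 1 < a i then ((k : ℝ) + 2) ^ m else 0) :=
        mul_le_mul_of_nonneg_left (pow_le_one_add_sum_ite_lt m N (ha i) (haN i)) (ha i)
      _ = _ := by
        rw [mul_add, mul_one, mul_sum]
        congr 1
        exact sum_congr rfl fun k _ => by split_ifs <;> ring
  calc c * ∑ i, a i ^ (m + 1)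
      ≤ c * ∑ i, (a i + ∑ k ∈ range N,
          ((k : ℝ) + 2) ^ m * (if (k : ℝ) + 1 < a i then a i else 0)) := by
        gcongr with i; exact hpoint i
    _ = c * ∑ i, a i + ∑ k ∈ range N,
          ((k : ℝ) + 2) ^ m * (c * ∑ i, if (k : ℝ) + 1 < a i then a i else 0) := by
        simp only [sum_add_distrib, mul_add, mul_sum]
        rw [sum_comm]
        congr 1
        exact sum_congr rfl fun k _ => sum_congr rfl fun i _ => mul_left_comm _ _ _
    _ ≤ c * ∑ i, a i + ∑ k ∈ range N, ((k : ℝ) + 2) ^ m * T ((k : ℝ) + 1) := by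
        gcongr with k; exact htail _ (by linarith [(Nat.cast_nonneg k : (0 : ℝ) ≤ k)])
    _ ≤ c * ∑ i, a i + ∑' k : ℕ, ((k : ℝ) + 2) ^ m * T ((k : ℝ) + 1) := by
        gcongr
        refine hT.sum_le_tsum _ fun k _ => mul_nonneg (by positivity) ?_
        exact (htail_nonneg _).trans (htail _ (by linarith [(Nat.cast_nonneg k : (0 : ℝ) ≤ k)]))

lemma summable_add_two_pow_mul_exp_neg_mul (m : ℕ) (c : ℝ) {r : ℝ} (hr : 0 < r) :
    Summable fun k : ℕ => ((k : ℝ) + 2) ^ m * (c * exp (-r * ((k : ℝ) + 1))) := by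
  refine (((summable_nat_add_iff 2).2 (summable_pow_mul_exp_neg_nat_mul m hr)).mul_left
    (c * exp r)).congr fun k => ?_
  push_cast
  rw [show -r * ((k : ℝ) + 1) = r + -r * ((k : ℝ) + 2) by ring, exp_add]
  ring

lemma sum_le_card_add_sum_ite_one_lt {ι : Type*} [Fintype ι] (a : ι → ℝ) :
    ∑ i, a i ≤ Fintype.card ι + ∑ i, (if 1 < a i then a i else 0) := by
  calc ∑ i, a i ≤ ∑ i, (1 + if 1 < a i then a i else 0) :=
        sum_le_sum fun i _ => by split_ifs with h <;> linarith
    _ = _ := by rw [sum_add_distrib, sum_const, card_univ, nsmul_one]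

/-- the weighted-tails lemma. -/
theorem statement16 (c0 c1 : ℝ) (hc0 : 0 < c0) (hc1 : 0 < c1) :
    ∃ c2 : ℝ, 0 < c2 ∧
      ∀ n : ℕ, 0 < n →
        ∀ w : Fin n → ℝ, (∀ i, 0 < w i) →
          (∀ t : ℝ, 1 ≤ t →
            (1 / (n : ℝ)) * ∑ i, (if t < w i then w i else 0) ≤
              c0 * Real.exp (-c1 * t)) →
          ∀ ℓ : ℕ, ∀ P : Fin ℓ → Finset (Fin n),
            (∀ j k : Fin ℓ, j ≠ k → Disjoint (P j) (P k)) →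
            (∀ i : Fin n, ∃ j, i ∈ P j) →
            (∀ t : ℝ, 1 ≤ t →
              (1 / (n : ℝ)) *
                  ∑ j, (if t < ((P j).card : ℝ) then ((P j).card : ℝ) else 0) ≤
                c0 * Real.exp (-c1 * t)) →
            (1 / (n : ℝ)) * ∑ j, (∑ i ∈ P j, w i) ^ 2 ≤ c2 := by
  set S : ℕ → ℝ := fun m => ∑' k : ℕ, ((k : ℝ) + 2) ^ m * (c0 * exp (-c1 * ((k : ℝ) + 1)))
  have hS : ∀ m, 0 ≤ S m := fun m => tsum_nonneg fun k => by positivity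
  refine ⟨2 + c0 + S 2 + S 3, by linarith [hS 2, hS 3], ?_⟩
  intro n hn w hw hwt ℓ P hdisj _ hPt
  have hn1 : 1 / (n : ℝ) * n = 1 := one_div_mul_cancel (by positivity)
  have hw1 : 1 / (n : ℝ) * ∑ i, w i ≤ 1 + c0 := by
    have h := mul_le_mul_of_nonneg_left (sum_le_card_add_sum_ite_one_lt w)
      (by positivity : 0 ≤ 1 / (n : ℝ))
    rw [Fintype.card_fin, mul_add, hn1] at h
    have hexp : c0 * exp (-c1 * 1) ≤ c0 :=
      mul_le_of_le_one_right hc0.le (exp_le_one_iff.2 (by linarith))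
    linarith [hwt 1 le_rfl]
  have hP1 : 1 / (n : ℝ) * ∑ j, (#(P j) : ℝ) ≤ 1 := by
    have h : ∑ j, (#(P j) : ℝ) ≤ n := by
      exact_mod_cast (sum_card_le_card_of_pairwise_disjoint hdisj).trans (Fintype.card_fin n).le
    calc 1 / (n : ℝ) * ∑ j, (#(P j) : ℝ) ≤ 1 / (n : ℝ) * n := by gcongr
      _ = 1 := hn1
  have hw3 := mul_sum_pow_succ_le_of_tail_le (fun i => (hw i).le) (by positivity) 2
    (fun t => c0 * exp (-c1 * t)) hwt (summable_add_two_pow_mul_exp_neg_mul 2 c0 hc1)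
  have hP4 := mul_sum_pow_succ_le_of_tail_le (fun j => (#(P j)).cast_nonneg) (by positivity) 3
    (fun t => c0 * exp (-c1 * t)) hPt (summable_add_two_pow_mul_exp_neg_mul 3 c0 hc1)
  calc 1 / (n : ℝ) * ∑ j, (∑ i ∈ P j, w i) ^ 2
      ≤ 1 / (n : ℝ) * (∑ i, w i ^ 3 + ∑ j, (#(P j) : ℝ) ^ 4) := by
        gcongr
        exact sum_sq_sum_le_sum_pow_three_add_sum_card_pow_four (fun i => (hw i).le) hdisj
    _ ≤ 2 + c0 + S 2 + S 3 := by
        rw [mul_add]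
        linarith
end
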